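/- For every integer λ ≥ 1, the identity (1:u)_λ·(1:u)_1·w_λ·w₁ = [λ+1]·(1:u)_{λ+1}·w_{λ+1} + (1:u)_1·(1:u)_{λ−1}·w_{λ−1} holds in the Laurent polynomial ring ℚ(u)[z, z^{−1}] over the field of rational functions ℚ(u), where [λ+1] := (1−u^{λ+1})/(1−u). -/

import Mathlib

/-!
Since `w₁ = z + z⁻¹`, comparing coefficients of `z^{λ+1-2p}` and clearing the scalars
(`[λ+1]·(1:u)_{λ+1} = (1:u)_λ·(1:u)_1` and
`(1:u)_1·(1:u)_{λ-1} = (1 - u^λ)·(1:u)_λ·(1:u)_1`) reduces the identity to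
`[λ;p] + [λ;p-1] = [λ+1;p] + (1 - u^λ)·[λ-1;p-1]`. This is the `u`-Pascal rule
`[λ+1;p] = [λ;p-1] + u^p·[λ;p]` combined with the absorption rule
`(1 - u^p)·[λ;p] = (1 - u^λ)·[λ-1;p-1]`. Both follow from
`[n;k]·∏_{i<k}(u^{i+1} - 1) = ∏_{i<k}(u^{n-i} - 1)`, for which the division by a monic
polynomial in `gb` must be exact; that divisibility is itself an induction on the product form
of the Pascal rule.
-/

open Polynomial Finset

/-- The Gaussian binomial coefficient `[n; k] ∈ ℤ[u]`, defined as
`∏_{i=1}^{k} (1 − u^{n−i+1})/(1 − u^i)` for `0 ≤ k ≤ n`, and `0` otherwise. -/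
noncomputable def gb (n : ℕ) (k : ℤ) : Polynomial ℤ :=
  if 0 ≤ k ∧ k ≤ (n : ℤ) then
    (∏ i ∈ Finset.Icc 1 k.toNat, ((X : Polynomial ℤ) ^ (n - i + 1) - 1)) /ₘ
      (∏ i ∈ Finset.Icc 1 k.toNat, ((X : Polynomial ℤ) ^ i - 1))
  else 0

/-- The canonical embedding `ℤ[u] → ℚ(u)`. -/
noncomputable def iQ : Polynomial ℤ →+* RatFunc ℚ :=
  (algebraMap (Polynomial ℚ) (RatFunc ℚ)).comp (Polynomial.mapRingHom (Int.castRingHom ℚ))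

/-- `(1:u)_n := ∏_{i=1}^{n} (1 − u^i)⁻¹` in `ℚ(u)`. -/
noncomputable def poch (n : ℕ) : RatFunc ℚ :=
  ∏ i ∈ Finset.Icc 1 n, (1 - RatFunc.X ^ i)⁻¹

/-- `w_λ := Σ_{p=0}^{λ} [λ; p]·z^{λ−2p}`, viewed in `ℚ(u)[z, z⁻¹]`. -/
noncomputable def wloc (l : ℕ) : LaurentPolynomial (RatFunc ℚ) :=
  ∑ p ∈ Finset.range (l + 1),
    LaurentPolynomial.C (iQ (gb l p)) * LaurentPolynomial.T ((l : ℤ) - 2 * p)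

lemma prod_Icc_one_eq_prod_range {M : Type*} [CommMonoid M] (f : ℕ → M) (k : ℕ) :
    ∏ i ∈ Icc 1 k, f i = ∏ i ∈ range k, f (i + 1) := by
  rw [← Finset.Ico_add_one_right_eq_Icc, prod_Ico_eq_prod_range, Nat.add_sub_cancel]
  simp only [add_comm 1]

namespace GaussBinom

-- Because of truncated subtraction this vanishes for `k > n` (factor `X ^ 0 - 1`), which makes
-- `gb n k * qFactorial k = qDescFactorial n k` hold for every `k`.
noncomputable def qDescFactorial (n k : ℕ) : ℤ[X] := ∏ i ∈ range k, (X ^ (n - i) - 1)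

noncomputable def qFactorial (k : ℕ) : ℤ[X] := ∏ i ∈ range k, (X ^ (i + 1) - 1)

lemma qDescFactorial_succ_right (n k : ℕ) :
    qDescFactorial n (k + 1) = qDescFactorial n k * (X ^ (n - k) - 1) :=
  prod_range_succ _ _

lemma qDescFactorial_succ_succ (n k : ℕ) :
    qDescFactorial (n + 1) (k + 1) = qDescFactorial n k * (X ^ (n + 1) - 1) := by
  simp only [qDescFactorial, prod_range_succ', Nat.add_sub_add_right, Nat.sub_zero]

lemma qFactorial_succ (k : ℕ) : qFactorial (k + 1) = qFactorial k * (X ^ (k + 1) - 1) :=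
  prod_range_succ _ _

lemma qDescFactorial_self (n : ℕ) : qDescFactorial n n = qFactorial n := by
  rw [qDescFactorial, qFactorial, ← prod_range_reflect]
  refine prod_congr rfl fun i hi => ?_
  rw [mem_range] at hi
  congr 2
  omega

lemma qDescFactorial_of_lt {n k : ℕ} (h : n < k) : qDescFactorial n k = 0 :=
  prod_eq_zero (mem_range.mpr h) (by simp)

lemma qFactorial_monic (k : ℕ) : (qFactorial k).Monic :=
  monic_prod_of_monic _ _ fun i _ => by simpa using monic_X_pow_sub_C (1 : ℤ) i.succ_ne_zero

lemma qFactorial_ne_zero (k : ℕ) : qFactorial k ≠ 0 := (qFactorial_monic k).ne_zero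

lemma qDescFactorial_succ_succ_eq_add (n k : ℕ) :
    qDescFactorial (n + 1) (k + 1) =
      (X ^ (k + 1) - 1) * qDescFactorial n k + X ^ (k + 1) * qDescFactorial n (k + 1) := by
  rcases lt_or_ge n (k + 1) with h | h
  · rcases (Nat.lt_succ_iff.mp h).lt_or_eq with h' | rfl
    · rw [qDescFactorial_of_lt (by omega), qDescFactorial_of_lt h', qDescFactorial_of_lt h]
      ring
    · rw [qDescFactorial_of_lt h, qDescFactorial_succ_succ]
      ring
  · have hpow : (X : ℤ[X]) ^ (k + 1) * X ^ (n - k) = X ^ (n + 1) := by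
      rw [← pow_add]; congr 1; omega
    rw [qDescFactorial_succ_succ, qDescFactorial_succ_right]
    linear_combination -qDescFactorial n k * hpow

lemma qFactorial_dvd_qDescFactorial (n k : ℕ) : qFactorial k ∣ qDescFactorial n k := by
  induction n generalizing k with
  | zero =>
    cases k with
    | zero => rfl
    | succ k => simp [qDescFactorial_of_lt]
  | succ n ih =>
    cases k with
    | zero => rfl
    | succ k =>
      rw [qDescFactorial_succ_succ_eq_add]
      refine dvd_add ?_ (dvd_mul_of_dvd_right (ih (k + 1)) _)
      rw [qFactorial_succ, mul_comm]
      exact mul_dvd_mul_left _ (ih k)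

lemma gb_of_lt_zero (n : ℕ) {k : ℤ} (hk : k < 0) : gb n k = 0 := if_neg (by omega)

lemma gb_of_lt (n : ℕ) {k : ℤ} (hk : (n : ℤ) < k) : gb n k = 0 := if_neg (by omega)

lemma gb_mul_qFactorial (n k : ℕ) : gb n k * qFactorial k = qDescFactorial n k := by
  rcases lt_or_ge n k with h | h
  · rw [gb, if_neg (by omega), zero_mul, qDescFactorial_of_lt h]
  have hquot : gb n k = qDescFactorial n k /ₘ qFactorial k := by
    rw [gb, if_pos (by omega), Int.toNat_natCast, prod_Icc_one_eq_prod_range,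
      prod_Icc_one_eq_prod_range]
    congr 1
    refine prod_congr rfl fun i hi => ?_
    rw [mem_range] at hi
    congr 2
    omega
  obtain ⟨q, hq⟩ := qFactorial_dvd_qDescFactorial n k
  rw [hquot, hq, mul_divByMonic_cancel_left _ (qFactorial_monic k), mul_comm]

lemma gb_zero_right (n : ℕ) : gb n 0 = 1 := by
  simpa [qFactorial, qDescFactorial] using gb_mul_qFactorial n 0

lemma gb_self (n : ℕ) : gb n n = 1 := by
  have h := gb_mul_qFactorial n n
  rwa [qDescFactorial_self, mul_eq_right₀ (qFactorial_ne_zero n)] at h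

lemma gb_succ_succ (n k : ℕ) : gb (n + 1) (k + 1) = gb n k + X ^ (k + 1) * gb n (k + 1) := by
  refine mul_right_cancel₀ (qFactorial_ne_zero (k + 1)) ?_
  have h₀ := gb_mul_qFactorial n k
  have h₁ := gb_mul_qFactorial n (k + 1)
  have h₂ := gb_mul_qFactorial (n + 1) (k + 1)
  push_cast at h₁ h₂
  rw [h₂, qDescFactorial_succ_succ_eq_add]
  linear_combination -(X ^ (k + 1) - 1) * h₀ - X ^ (k + 1) * h₁ - gb n k * qFactorial_succ k

lemma X_pow_sub_one_mul_gb_succ_succ (n k : ℕ) :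
    (X ^ (k + 1) - 1) * gb (n + 1) (k + 1) = (X ^ (n + 1) - 1) * gb n k := by
  refine mul_right_cancel₀ (qFactorial_ne_zero k) ?_
  have h₀ := gb_mul_qFactorial n k
  have h₂ := gb_mul_qFactorial (n + 1) (k + 1)
  push_cast at h₂
  rw [qFactorial_succ, qDescFactorial_succ_succ] at h₂
  linear_combination h₂ - (X ^ (n + 1) - 1) * h₀

lemma gb_add_gb_sub_one (n : ℕ) (p : ℤ) :
    gb (n + 1) p + gb (n + 1) (p - 1) = gb (n + 2) p + (1 - X ^ (n + 1)) * gb n (p - 1) := by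
  rcases lt_or_ge p 0 with hp | hp
  · simp only [gb_of_lt_zero _ hp, gb_of_lt_zero _ (show p - 1 < 0 by omega), mul_zero, add_zero]
  rcases hp.eq_or_lt with rfl | hp
  · simp only [gb_zero_right, gb_of_lt_zero _ (show (0 : ℤ) - 1 < 0 by omega), mul_zero]
  obtain ⟨k, rfl⟩ : ∃ k : ℕ, p = k + 1 := ⟨(p - 1).toNat, by omega⟩
  rw [add_sub_cancel_right, gb_succ_succ (n + 1) k]
  linear_combination -X_pow_sub_one_mul_gb_succ_succ n k

lemma iQ_X : iQ X = RatFunc.X := by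
  simp [iQ, RatFunc.algebraMap_X]

lemma iQ_injective : Function.Injective iQ :=
  (RatFunc.algebraMap_injective ℚ).comp (map_injective _ (Int.castRingHom ℚ).injective_int)

end GaussBinom

namespace LaurentPolynomial

variable {R : Type*} [Semiring R]

noncomputable def stepTwoSum (n : ℕ) (e : ℤ) (c : ℤ → R) : R[T;T⁻¹] :=
  ∑ p ∈ range n, C (c p) * T (e - 2 * p)

lemma C_mul_stepTwoSum (a : R) (n : ℕ) (e : ℤ) (c : ℤ → R) :
    C a * stepTwoSum n e c = stepTwoSum n e (fun p => a * c p) := by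
  simp only [stepTwoSum, mul_sum, map_mul, mul_assoc]

lemma stepTwoSum_add (n : ℕ) (e : ℤ) (c d : ℤ → R) :
    stepTwoSum n e c + stepTwoSum n e d = stepTwoSum n e (c + d) := by
  simp only [stepTwoSum, ← sum_add_distrib, Pi.add_apply, map_add, add_mul]

lemma stepTwoSum_mul_T (n : ℕ) (e k : ℤ) (c : ℤ → R) :
    stepTwoSum n e c * T k = stepTwoSum n (e + k) c := by
  simp only [stepTwoSum, sum_mul, mul_assoc, ← T_add]
  congr! 3
  ring

end LaurentPolynomial

open LaurentPolynomial GaussBinom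

lemma wloc_eq_stepTwoSum {l s n : ℕ} (h : l + 1 + s ≤ n) :
    wloc l = stepTwoSum n (l + 2 * s) (fun p => iQ (gb l (p - s))) := by
  obtain ⟨r, rfl⟩ : ∃ r, n = s + (l + 1) + r := ⟨n - (l + 1 + s), by omega⟩
  rw [stepTwoSum, sum_range_add, sum_range_add]
  have hlow : ∑ p ∈ range s,
      LaurentPolynomial.C (iQ (gb l (p - s))) * T ((l + 2 * s : ℤ) - 2 * p) = 0 :=
    sum_eq_zero fun p hp => by
      rw [gb_of_lt_zero _ (by simp at hp; omega), map_zero, map_zero, zero_mul]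
  have hhigh : ∑ p ∈ range r,
      LaurentPolynomial.C (iQ (gb l ((s + (l + 1) + p : ℕ) - s))) *
        T ((l + 2 * s : ℤ) - 2 * (s + (l + 1) + p : ℕ)) = 0 :=
    sum_eq_zero fun p _ => by
      rw [gb_of_lt _ (by omega), map_zero, map_zero, zero_mul]
  rw [hlow, hhigh, zero_add, add_zero, wloc]
  refine sum_congr rfl fun p _ => ?_
  push_cast
  ring_nf

lemma wloc_one : wloc 1 = T 1 + T (-1) := by
  rw [wloc, sum_range_succ, sum_range_one]
  norm_num [gb_zero_right, show gb 1 1 = 1 by simpa using gb_self 1]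

lemma wloc_mul_wloc_one {l : ℕ} (hl : 1 ≤ l) :
    wloc l * wloc 1 = wloc (l + 1) + LaurentPolynomial.C (1 - RatFunc.X ^ l) * wloc (l - 1) := by
  obtain ⟨m, rfl⟩ := Nat.exists_eq_add_of_le' hl
  have hup : wloc (m + 1) * T 1 = stepTwoSum (m + 3) (m + 2) (fun p => iQ (gb (m + 1) p)) := by
    rw [wloc_eq_stepTwoSum (s := 0) (n := m + 3) (by omega), stepTwoSum_mul_T]
    push_cast
    ring_nf
  have hdown : wloc (m + 1) * T (-1) =
      stepTwoSum (m + 3) (m + 2) (fun p => iQ (gb (m + 1) (p - 1))) := by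
    rw [wloc_eq_stepTwoSum (s := 1) (n := m + 3) (by omega), stepTwoSum_mul_T]
    push_cast
    ring_nf
  have hsucc : wloc (m + 1 + 1) = stepTwoSum (m + 3) (m + 2) (fun p => iQ (gb (m + 2) p)) := by
    rw [wloc_eq_stepTwoSum (s := 0) (n := m + 3) (by omega)]
    push_cast
    ring_nf
  have hpred : wloc (m + 1 - 1) = stepTwoSum (m + 3) (m + 2) (fun p => iQ (gb m (p - 1))) := by
    rw [Nat.add_sub_cancel, wloc_eq_stepTwoSum (s := 1) (n := m + 3) (by omega)]
    push_cast
    ring_nf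
  rw [wloc_one, mul_add, hup, hdown, hsucc, hpred, stepTwoSum_add, C_mul_stepTwoSum,
    stepTwoSum_add]
  congr 1
  funext p
  simpa [iQ_X] using congrArg iQ (gb_add_gb_sub_one m p)

lemma poch_zero : poch 0 = 1 := prod_empty

lemma poch_succ (n : ℕ) : poch (n + 1) = poch n * (1 - RatFunc.X ^ (n + 1))⁻¹ :=
  prod_Icc_succ_top (by omega) _

lemma one_sub_X_pow_ne_zero {k : ℕ} (hk : k ≠ 0) : (1 : RatFunc ℚ) - RatFunc.X ^ k ≠ 0 := by
  rw [← iQ_X, ← map_pow, ← map_one iQ, ← map_sub, ← neg_sub, map_neg, neg_ne_zero,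
    map_ne_zero_iff _ iQ_injective]
  simpa using (monic_X_pow_sub_C (1 : ℤ) hk).ne_zero

/-- For every integer `λ ≥ 1`, the identity
`(1:u)_λ·(1:u)_1·w_λ·w₁ = [λ+1]·(1:u)_{λ+1}·w_{λ+1} + (1:u)_1·(1:u)_{λ−1}·w_{λ−1}`
holds in `ℚ(u)[z, z⁻¹]`, where `[λ+1] := (1 − u^{λ+1})/(1 − u)`. -/
theorem stmt_2 (lam : ℕ) (hlam : 1 ≤ lam) :
    LaurentPolynomial.C (poch lam * poch 1) * (wloc lam * wloc 1) =
      LaurentPolynomial.C ((1 - RatFunc.X ^ (lam + 1)) / (1 - RatFunc.X) * poch (lam + 1)) *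
          wloc (lam + 1) +
        LaurentPolynomial.C (poch 1 * poch (lam - 1)) * wloc (lam - 1) := by
  obtain ⟨m, rfl⟩ := Nat.exists_eq_add_of_le' hlam
  have h₁ := one_sub_X_pow_ne_zero (k := 1) (by omega)
  have h₂ := one_sub_X_pow_ne_zero (k := m + 1) (by omega)
  have h₃ := one_sub_X_pow_ne_zero (k := m + 1 + 1) (by omega)
  have hsucc : (1 - RatFunc.X ^ (m + 1 + 1)) / (1 - RatFunc.X) * poch (m + 1 + 1) =
      poch (m + 1) * poch 1 := by
    rw [poch_succ (m + 1), poch_succ 0, poch_zero, zero_add, pow_one]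
    field_simp
  have hpred : poch 1 * poch (m + 1 - 1) = poch (m + 1) * poch 1 * (1 - RatFunc.X ^ (m + 1)) := by
    rw [poch_succ m, Nat.add_sub_cancel]
    field_simp
  rw [hsucc, hpred, wloc_mul_wloc_one hlam]
  simp only [map_mul]
  ring
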